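/- arXiv:2509.18389 — 3 statements merged into one kernel-verified Lean document; each statement's English description precedes it below -/
import Mathlib

section
/- (Lemma 2, part 1) For every l ≥ 0 and every query index j ∈ {1,…,n}, the bottom-right entry y_l^q of the embedding Z_l evolved from Z_0(j) under the TD parameters satisfies |y_l^q| ≤ (1 + γ^l) ‖v‖_∞; equivalently, ‖w_l‖_∞ ≤ (1 + γ^l) ‖v‖_∞. -/
open Matrix Filter Topology

noncomputable section

/-- Index type for `2n` rows (two stacked copies of the feature dimension). -/
abbrev TwoN (n : ℕ) := Fin n ⊕ Fin n
/-- Row index type for prompts: `2n + 1`. -/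
abbrev RIdx (n : ℕ) := TwoN n ⊕ Unit
/-- Column index type for prompts: `n + 1` (context columns plus the query column). -/
abbrev CIdx (n : ℕ) := Fin n ⊕ Unit

/-- The mask `M = [[I_n, 0],[0, 0]]`. -/
def maskM (n : ℕ) : Matrix (CIdx n) (CIdx n) ℝ := Matrix.fromBlocks 1 0 0 0

/-- One linear attention layer `Z ↦ Z + P̃ Z M (Zᵀ Q̃ Z)`. -/
def attnLayer (n : ℕ) (Pm Qm : Matrix (RIdx n) (RIdx n) ℝ)
    (Z : Matrix (RIdx n) (CIdx n) ℝ) : Matrix (RIdx n) (CIdx n) ℝ :=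
  Z + Pm * Z * maskM n * (Zᵀ * Qm * Z)

/-- `P̃ = [[0, 0],[u, 1]]`. -/
def Pmat (n : ℕ) (u : Matrix Unit (TwoN n) ℝ) : Matrix (RIdx n) (RIdx n) ℝ :=
  Matrix.fromBlocks 0 0 u 1

/-- `Q̃ = [[A, 0],[0, 0]]`. -/
def Qmat (n : ℕ) (A : Matrix (TwoN n) (TwoN n) ℝ) : Matrix (RIdx n) (RIdx n) ℝ :=
  Matrix.fromBlocks A 0 0 0

/-- `A^TD = [[-I, I],[0, 0]]`. -/
def Atd (n : ℕ) : Matrix (TwoN n) (TwoN n) ℝ := Matrix.fromBlocks (-1) 1 0 0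

/-- A row-stochastic matrix. -/
def RowStochastic {n : ℕ} (P : Matrix (Fin n) (Fin n) ℝ) : Prop :=
  (∀ i k, 0 ≤ P i k) ∧ ∀ i, ∑ k, P i k = 1

/-- TD iterates `w_0 = 0`, `w_{l+1} = r + γ P w_l`. -/
def tdW {n : ℕ} (γ : ℝ) (P : Matrix (Fin n) (Fin n) ℝ) (r : Fin n → ℝ) : ℕ → Fin n → ℝ
  | 0 => 0
  | l + 1 => r + γ • P.mulVec (tdW γ P r l)

/-- The value vector `v = (I - γ P)⁻¹ r`. -/
def valueV {n : ℕ} (γ : ℝ) (P : Matrix (Fin n) (Fin n) ℝ) (r : Fin n → ℝ) : Fin n → ℝ :=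
  ((1 : Matrix (Fin n) (Fin n) ℝ) - γ • P)⁻¹.mulVec r

/-- The prompt `Z_0(j)`: the `i`-th column is `(e_i, γ Pᵀ e_i, r_i)` and the query
column is `(e_j, 0, 0)`. -/
def prompt {n : ℕ} (γ : ℝ) (P : Matrix (Fin n) (Fin n) ℝ) (r : Fin n → ℝ) (j : Fin n) :
    Matrix (RIdx n) (CIdx n) ℝ := fun p q =>
  match p, q with
  | Sum.inl (Sum.inl k), Sum.inl i => if k = i then 1 else 0
  | Sum.inl (Sum.inr k), Sum.inl i => γ * P i k
  | Sum.inr _, Sum.inl i => r i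
  | Sum.inl (Sum.inl k), Sum.inr _ => if k = j then 1 else 0
  | Sum.inl (Sum.inr _), Sum.inr _ => 0
  | Sum.inr _, Sum.inr _ => 0

/-- Embeddings `Z_l` of the looped transformer with shared parameters `(A, u)`,
starting from the prompt `Z_0(j)`. -/
def embed {n : ℕ} (γ : ℝ) (P : Matrix (Fin n) (Fin n) ℝ) (r : Fin n → ℝ) (j : Fin n)
    (A : Matrix (TwoN n) (TwoN n) ℝ) (u : Matrix Unit (TwoN n) ℝ) :
    ℕ → Matrix (RIdx n) (CIdx n) ℝ
  | 0 => prompt γ P r j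
  | l + 1 => attnLayer n (Pmat n u) (Qmat n A) (embed γ P r j A u l)

/-- Looped `L`-layer transformer output `F_L^{(j)}(A, u) = -(Z_L)_{2n+1, n+1}`. -/
def tfOut {n : ℕ} (γ : ℝ) (P : Matrix (Fin n) (Fin n) ℝ) (r : Fin n → ℝ) (j : Fin n)
    (A : Matrix (TwoN n) (TwoN n) ℝ) (u : Matrix Unit (TwoN n) ℝ) (L : ℕ) : ℝ :=
  -(embed γ P r j A u L (Sum.inr ()) (Sum.inr ()))

/-- `TF_L(Z_0(j); θ_L^TD)`: the transformer output with the TD parameters. -/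
def tfTD {n : ℕ} (γ : ℝ) (P : Matrix (Fin n) (Fin n) ℝ) (r : Fin n → ℝ) (j : Fin n) (L : ℕ) : ℝ :=
  tfOut γ P r j (Atd n) 0 L

/-- `X ∈ ℝ^{2n×n}`: the `i`-th column is `(e_i, γ Pᵀ e_i)`. -/
def Xmat {n : ℕ} (γ : ℝ) (P : Matrix (Fin n) (Fin n) ℝ) : Matrix (TwoN n) (Fin n) ℝ :=
  fun p i => match p with
  | Sum.inl k => if k = i then 1 else 0
  | Sum.inr k => γ * P i k

/-- The query vector `x^q = (e_ω, 0) ∈ ℝ^{2n}`. -/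
def xqv {n : ℕ} (ω : Fin n) : TwoN n → ℝ := fun p =>
  match p with
  | Sum.inl k => if k = ω then 1 else 0
  | Sum.inr _ => 0

/-- Operator norm induced by the ℓ1 vector norm: maximum absolute column sum. -/
def matL1 {m k : Type*} [Fintype m] [Fintype k] (B : Matrix m k ℝ) : ℝ :=
  ⨆ j, ∑ i, |B i j|

/-- `G_0^{(i)} = 0`, `G_{l+1}^{(i)} = X (r - w_l) (X e_i)ᵀ + γ Σ_j P_{ij} G_l^{(j)}`. -/
def Gseq {n : ℕ} (γ : ℝ) (P : Matrix (Fin n) (Fin n) ℝ) (r : Fin n → ℝ) :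
    ℕ → Fin n → Matrix (TwoN n) (TwoN n) ℝ
  | 0 => fun _ => 0
  | l + 1 => fun i =>
      Matrix.vecMulVec ((Xmat γ P).mulVec (r - tdW γ P r l)) ((Xmat γ P).mulVec (Pi.single i 1))
        + γ • ∑ j, P i j • Gseq γ P r l j

/-- `H_0 = 0`, `H_{l+1} = H_l + X (r - w_l) (x^q)ᵀ - G_l^{(ω)}`. -/
def Hseq {n : ℕ} (γ : ℝ) (P : Matrix (Fin n) (Fin n) ℝ) (r : Fin n → ℝ) (ω : Fin n) :
    ℕ → Matrix (TwoN n) (TwoN n) ℝ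
  | 0 => 0
  | l + 1 => Hseq γ P r ω l
      + Matrix.vecMulVec ((Xmat γ P).mulVec (r - tdW γ P r l)) (xqv ω)
      - Gseq γ P r l ω

/-- `U_0 = 0`, `U_{l+1} = X Xᵀ A^TD X + γ U_l Pᵀ`. -/
def Useq {n : ℕ} (γ : ℝ) (P : Matrix (Fin n) (Fin n) ℝ) : ℕ → Matrix (TwoN n) (Fin n) ℝ
  | 0 => 0
  | l + 1 => Xmat γ P * (Xmat γ P)ᵀ * Atd n * Xmat γ P + γ • (Useq γ P l * Pᵀ)

/-- `h_0 = 0`, `h_{l+1} = h_l + X Xᵀ A^TD x^q + U_l Xᵀ A^TD x^q`. -/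
def hseq {n : ℕ} (γ : ℝ) (P : Matrix (Fin n) (Fin n) ℝ) (ω : Fin n) : ℕ → TwoN n → ℝ
  | 0 => 0
  | l + 1 => hseq γ P ω l
      + (Xmat γ P * (Xmat γ P)ᵀ * Atd n).mulVec (xqv ω)
      + (Useq γ P l * (Xmat γ P)ᵀ * Atd n).mulVec (xqv ω)

/-- `g_L(j)`: the vector of all partial derivatives of `F_L^{(j)}` with respect to the
entries of `A` and of `u`, evaluated at the TD parameters `(A^TD, 0)`. -/
def gvec {n : ℕ} (γ : ℝ) (P : Matrix (Fin n) (Fin n) ℝ) (r : Fin n → ℝ) (L : ℕ) (j : Fin n) :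
    (TwoN n × TwoN n) ⊕ TwoN n → ℝ
  | Sum.inl ab => deriv (fun t : ℝ =>
      tfOut γ P r j (Atd n + t • Matrix.single ab.1 ab.2 1) 0 L) 0
  | Sum.inr k => deriv (fun t : ℝ =>
      tfOut γ P r j (Atd n) (t • Matrix.single () k 1) L) 0


/-!
The TD embedding keeps `X` and `x^q` fixed, and its bottom row is `((γ P)^l r, -w_l(j))`: one
layer multiplies the row by `γ P` and subtracts its `j`-th entry from the corner, so the
corner accumulates `-(w_l)_j` with `w_l = ∑_{k<l} (γ P)^k r`. Meanwhile the value
vector is the fixed point of `w ↦ r + γ P w`, hence `v - w_l = (γ P)^l v`, and a row-stochastic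
`P` is nonexpansive in `‖·‖_∞`; so `‖w_l‖_∞ ≤ ‖v‖_∞ + γ^l ‖v‖_∞`.
-/

section Stochastic

variable {ι : Type*} [Fintype ι] [DecidableEq ι] {M : Matrix ι ι ℝ} {γ : ℝ}

lemma norm_mulVec_le_of_mem_rowStochastic (hM : M ∈ rowStochastic ℝ ι) (x : ι → ℝ) :
    ‖M *ᵥ x‖ ≤ ‖x‖ := by
  refine (pi_norm_le_iff_of_nonneg (norm_nonneg x)).2 fun i => ?_
  calc ‖(M *ᵥ x) i‖ = |∑ k, M i k * x k| := rfl
    _ ≤ ∑ k, |M i k * x k| := Finset.abs_sum_le_sum_abs _ _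
    _ ≤ ∑ k, M i k * ‖x‖ := by
        refine Finset.sum_le_sum fun k _ => ?_
        rw [abs_mul, abs_of_nonneg (nonneg_of_mem_rowStochastic hM)]
        exact mul_le_mul_of_nonneg_left (norm_le_pi_norm x k) (nonneg_of_mem_rowStochastic hM)
    _ = ‖x‖ := by rw [← Finset.sum_mul, sum_row_of_mem_rowStochastic hM, one_mul]

lemma norm_smul_mulVec_le_of_mem_rowStochastic (hM : M ∈ rowStochastic ℝ ι) (hγ : 0 ≤ γ)
    (x : ι → ℝ) : ‖(γ • M) *ᵥ x‖ ≤ γ * ‖x‖ := by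
  rw [smul_mulVec, norm_smul, Real.norm_of_nonneg hγ]
  exact mul_le_mul_of_nonneg_left (norm_mulVec_le_of_mem_rowStochastic hM x) hγ

lemma norm_smul_pow_mulVec_le_of_mem_rowStochastic (hM : M ∈ rowStochastic ℝ ι) (hγ : 0 ≤ γ)
    (x : ι → ℝ) (l : ℕ) : ‖((γ • M) ^ l) *ᵥ x‖ ≤ γ ^ l * ‖x‖ := by
  induction l with
  | zero => simp
  | succ l ih =>
    calc ‖((γ • M) ^ (l + 1)) *ᵥ x‖ = ‖(γ • M) *ᵥ (((γ • M) ^ l) *ᵥ x)‖ := by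
          rw [pow_succ', mulVec_mulVec]
      _ ≤ γ * (γ ^ l * ‖x‖) :=
          (norm_smul_mulVec_le_of_mem_rowStochastic hM hγ _).trans
            (mul_le_mul_of_nonneg_left ih hγ)
      _ = γ ^ (l + 1) * ‖x‖ := by ring

lemma isUnit_det_one_sub_smul_of_mem_rowStochastic (hM : M ∈ rowStochastic ℝ ι)
    (hγ0 : 0 ≤ γ) (hγ1 : γ < 1) : IsUnit (1 - γ • M).det := by
  rw [isUnit_iff_ne_zero]
  intro hdet
  obtain ⟨x, hx0, hx⟩ := exists_mulVec_eq_zero_iff.2 hdet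
  rw [sub_mulVec, one_mulVec, sub_eq_zero] at hx
  have hle : ‖x‖ ≤ γ * ‖x‖ := by
    simpa only [← hx] using norm_smul_mulVec_le_of_mem_rowStochastic hM hγ0 x
  nlinarith [norm_pos_iff.2 hx0]

end Stochastic

section TemporalDifference

variable {n : ℕ} {γ : ℝ} {P : Matrix (Fin n) (Fin n) ℝ} {r : Fin n → ℝ}

lemma RowStochastic.mem_rowStochastic (hP : RowStochastic P) : P ∈ rowStochastic ℝ (Fin n) :=
  mem_rowStochastic_iff_sum.2 hP

lemma tdW_succ_eq_add_pow_mulVec (l : ℕ) :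
    tdW γ P r (l + 1) = tdW γ P r l + ((γ • P) ^ l) *ᵥ r := by
  induction l with
  | zero => simp [tdW]
  | succ l ih =>
    change r + γ • P *ᵥ tdW γ P r (l + 1) = (r + γ • P *ᵥ tdW γ P r l) + _
    rw [ih, pow_succ', ← mulVec_mulVec, mulVec_add, smul_add, smul_mulVec]
    abel

lemma valueV_eq_add (hdet : IsUnit (1 - γ • P).det) :
    r + γ • P *ᵥ valueV γ P r = valueV γ P r := by
  have hinv : (1 - γ • P) *ᵥ valueV γ P r = r := by
    rw [valueV, mulVec_mulVec, mul_nonsing_inv _ hdet, one_mulVec]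
  rw [sub_mulVec, one_mulVec, smul_mulVec] at hinv
  nth_rw 1 [← hinv]
  exact sub_add_cancel _ _

lemma sub_tdW_eq_pow_mulVec {v : Fin n → ℝ} (hv : r + γ • P *ᵥ v = v) (l : ℕ) :
    v - tdW γ P r l = ((γ • P) ^ l) *ᵥ v := by
  induction l with
  | zero => simp [tdW]
  | succ l ih =>
    calc v - tdW γ P r (l + 1) = (r + γ • P *ᵥ v) - (r + γ • P *ᵥ tdW γ P r l) := by
          rw [hv]; rfl
      _ = (γ • P) *ᵥ (v - tdW γ P r l) := by
          rw [mulVec_sub, smul_mulVec, smul_mulVec]; abel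
      _ = ((γ • P) ^ (l + 1)) *ᵥ v := by rw [ih, mulVec_mulVec, ← pow_succ']

lemma norm_tdW_le (hP : RowStochastic P) (hγ0 : 0 ≤ γ) (hγ1 : γ < 1) (l : ℕ) :
    ‖tdW γ P r l‖ ≤ (1 + γ ^ l) * ‖valueV γ P r‖ := by
  set v := valueV γ P r
  have hP' := hP.mem_rowStochastic
  have hv := valueV_eq_add (r := r) (isUnit_det_one_sub_smul_of_mem_rowStochastic hP' hγ0 hγ1)
  calc ‖tdW γ P r l‖ = ‖v - (v - tdW γ P r l)‖ := by rw [sub_sub_cancel]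
    _ ≤ ‖v‖ + ‖((γ • P) ^ l) *ᵥ v‖ := by rw [← sub_tdW_eq_pow_mulVec hv]; exact norm_sub_le _ _
    _ ≤ ‖v‖ + γ ^ l * ‖v‖ :=
        add_le_add_right (norm_smul_pow_mulVec_le_of_mem_rowStochastic hP' hγ0 v l) _
    _ = (1 + γ ^ l) * ‖v‖ := by ring

end TemporalDifference

section Embedding

variable {n : ℕ} {γ : ℝ} {P : Matrix (Fin n) (Fin n) ℝ} {r : Fin n → ℝ}

lemma attnLayer_Pmat_zero_fromBlocks (A : Matrix (TwoN n) (TwoN n) ℝ)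
    (X : Matrix (TwoN n) (Fin n) ℝ) (xq : Matrix (TwoN n) Unit ℝ) (Y : Matrix Unit (Fin n) ℝ)
    (y : Matrix Unit Unit ℝ) :
    attnLayer n (Pmat n 0) (Qmat n A) (fromBlocks X xq Y y) =
      fromBlocks X xq (Y + Y * (Xᵀ * A * X)) (y + Y * (Xᵀ * A * xq)) := by
  simp [attnLayer, Pmat, Qmat, maskM, fromBlocks_transpose, fromBlocks_multiply,
    fromBlocks_add, Matrix.mul_assoc]

lemma Xmat_transpose_mul_Atd_mul_Xmat : (Xmat γ P)ᵀ * Atd n * Xmat γ P = -1 + γ • Pᵀ := by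
  ext a b
  simp [mul_apply, Atd, Xmat, fromBlocks, Fintype.sum_sum_type, one_apply, eq_comm]

lemma Xmat_transpose_mul_Atd_mulVec_xqv (j : Fin n) :
    ((Xmat γ P)ᵀ * Atd n) *ᵥ xqv j = -Pi.single j 1 := by
  ext a
  simp [mulVec, dotProduct, mul_apply, Atd, Xmat, xqv, fromBlocks, Fintype.sum_sum_type,
    one_apply, Pi.single_apply]

lemma embed_Atd_zero (j : Fin n) (l : ℕ) :
    embed γ P r j (Atd n) 0 l =
      fromBlocks (Xmat γ P) (replicateCol Unit (xqv j)) (replicateRow Unit (((γ • P) ^ l) *ᵥ r))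
        (of fun _ _ => -tdW γ P r l j) := by
  induction l with
  | zero =>
    ext ((k | k) | _) (i | _) <;> simp [embed, prompt, Xmat, xqv, fromBlocks, tdW]
  | succ l ih =>
    change attnLayer n (Pmat n 0) (Qmat n (Atd n)) (embed γ P r j (Atd n) 0 l) = _
    rw [ih, attnLayer_Pmat_zero_fromBlocks, Xmat_transpose_mul_Atd_mul_Xmat,
      ← replicateCol_mulVec, Xmat_transpose_mul_Atd_mulVec_xqv, replicateRow_mul_replicateCol,
      ← replicateRow_vecMul, ← replicateRow_add, tdW_succ_eq_add_pow_mulVec]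
    congr 2
    · rw [vecMul_add, vecMul_neg, vecMul_one, vecMul_smul, vecMul_transpose, pow_succ',
        ← mulVec_mulVec, smul_mulVec, add_neg_cancel_left]
    · ext
      simp [dotProduct_neg, add_comm]

lemma embed_Atd_zero_inr_inr (j : Fin n) (l : ℕ) :
    embed γ P r j (Atd n) 0 l (Sum.inr ()) (Sum.inr ()) = -tdW γ P r l j := by
  rw [embed_Atd_zero]
  rfl

end Embedding

theorem stmt6_general (n : ℕ) (γ : ℝ) (hγ0 : 0 ≤ γ) (hγ1 : γ < 1)
    (P : Matrix (Fin n) (Fin n) ℝ) (hP : RowStochastic P) (r : Fin n → ℝ)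
    (l : ℕ) (j : Fin n) :
    |embed γ P r j (Atd n) 0 l (Sum.inr ()) (Sum.inr ())| ≤ (1 + γ ^ l) * ‖valueV γ P r‖
    ∧ ‖tdW γ P r l‖ ≤ (1 + γ ^ l) * ‖valueV γ P r‖ := by
  have hw := norm_tdW_le (r := r) hP hγ0 hγ1 l
  refine ⟨?_, hw⟩
  rw [embed_Atd_zero_inr_inr, abs_neg, ← Real.norm_eq_abs]
  exact (norm_le_pi_norm _ j).trans hw

/-- Lemma 2, part 1: bound on the bottom-right entry `y_l^q` of the
embedding evolved under the TD parameters; equivalently `‖w_l‖_∞ ≤ (1 + γ^l) ‖v‖_∞`. -/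
theorem stmt6 (n : ℕ) (hn : 1 ≤ n) (γ : ℝ) (hγ0 : 0 ≤ γ) (hγ1 : γ < 1)
    (P : Matrix (Fin n) (Fin n) ℝ) (hP : RowStochastic P) (r : Fin n → ℝ)
    (l : ℕ) (j : Fin n) :
    |embed γ P r j (Atd n) 0 l (Sum.inr ()) (Sum.inr ())| ≤ (1 + γ ^ l) * ‖valueV γ P r‖
    ∧ ‖tdW γ P r l‖ ≤ (1 + γ ^ l) * ‖valueV γ P r‖ :=
  stmt6_general n γ hγ0 hγ1 P hP r l j

end
end

section
/- For every l ≥ 0 and every i ∈ {1,…,n}, the recursively defined matrices G_l^{(i)} (the layerwise gradients of the context entries of the looped Transformer with respect to the attention matrix A, evaluated at the TD parameters) satisfy ‖G_l^{(i)}‖_1 ≤ l · β, where β = n(1+γ)² ‖v‖_∞ and ‖·‖_1 is the operator norm induced by the ℓ1 vector norm (maximum absolute column sum). -/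
/-!
Since `v = r + γ P v` and `v - w_{l+1} = γ P (v - w_l)`, the TD residual obeys
`‖r - w_l‖_∞ ≤ (1 + γ) ‖v‖_∞`. The matrix `X` has entries in `[0, 1]` and satisfies
`‖X z‖_1 ≤ (1 + γ) ‖z‖_1 ≤ n (1 + γ) ‖z‖_∞` (row-stochasticity makes `Pᵀ` an `ℓ1`-contraction),
so the rank-one term of `G_{l+1}^{(i)}` has column `ℓ1`-norms at most `β`, while the other term
is `γ` times a convex combination of the `G_l^{(j)}`. Induction on `l` gives `l β`.
-/

open Matrix Filter Topology

noncomputable section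

lemma sum_abs_vecMulVec_add_smul_sum_apply_le {m k ι : Type*} [Fintype m] [Fintype ι]
    (a : m → ℝ) (b : k → ℝ) {γ : ℝ} (hγ : 0 ≤ γ) {w : ι → ℝ} (hw : ∀ j, 0 ≤ w j)
    (G : ι → Matrix m k ℝ) (c : k) :
    ∑ p, |(vecMulVec a b + γ • ∑ j, w j • G j) p c|
      ≤ (∑ p, |a p|) * |b c| + γ * ∑ j, w j * ∑ p, |G j p c| := by
  have hterm : ∀ p, |(vecMulVec a b + γ • ∑ j, w j • G j) p c|
      ≤ |a p| * |b c| + γ * ∑ j, w j * |G j p c| := fun p => by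
    simp only [Matrix.add_apply, Matrix.smul_apply, Matrix.sum_apply, vecMulVec_apply,
      smul_eq_mul]
    refine (abs_add_le _ _).trans ?_
    rw [abs_mul, abs_mul, abs_of_nonneg hγ]
    gcongr
    refine (Finset.abs_sum_le_sum_abs _ _).trans_eq ?_
    simp only [abs_mul, abs_of_nonneg (hw _)]
  refine (Finset.sum_le_sum fun p _ => hterm p).trans_eq ?_
  rw [Finset.sum_add_distrib, ← Finset.sum_mul, ← Finset.mul_sum, Finset.sum_comm]
  simp only [Finset.mul_sum]

namespace RowStochastic

variable {n : ℕ} {P : Matrix (Fin n) (Fin n) ℝ}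

lemma le_one (hP : RowStochastic P) (i k : Fin n) : P i k ≤ 1 :=
  hP.2 i ▸ Finset.single_le_sum (fun j _ => hP.1 i j) (Finset.mem_univ k)

lemma norm_mulVec_le (hP : RowStochastic P) (z : Fin n → ℝ) : ‖P *ᵥ z‖ ≤ ‖z‖ := by
  refine (pi_norm_le_iff_of_nonneg (norm_nonneg z)).2 fun k => ?_
  calc ‖(P *ᵥ z) k‖ = |∑ j, P k j * z j| := rfl
    _ ≤ ∑ j, P k j * ‖z‖ := by
        refine (Finset.abs_sum_le_sum_abs _ _).trans (Finset.sum_le_sum fun j _ => ?_)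
        rw [abs_mul, abs_of_nonneg (hP.1 k j)]
        exact mul_le_mul_of_nonneg_left (norm_le_pi_norm z j) (hP.1 k j)
    _ = ‖z‖ := by rw [← Finset.sum_mul, hP.2 k, one_mul]

lemma sum_abs_vecMul_le (hP : RowStochastic P) (z : Fin n → ℝ) :
    ∑ k, |(z ᵥ* P) k| ≤ ∑ j, |z j| :=
  calc ∑ k, |∑ j, z j * P j k| ≤ ∑ k, ∑ j, |z j| * P j k := by
        refine Finset.sum_le_sum fun k _ => (Finset.abs_sum_le_sum_abs _ _).trans_eq ?_
        simp only [abs_mul, abs_of_nonneg (hP.1 _ k)]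
    _ = ∑ j, |z j| := by
        rw [Finset.sum_comm]
        simp only [← Finset.mul_sum, hP.2, mul_one]

end RowStochastic

section TemporalDifference

variable {n : ℕ} {γ : ℝ} {P : Matrix (Fin n) (Fin n) ℝ} {r : Fin n → ℝ}

lemma eq_zero_of_eq_smul_mulVec (hγ0 : 0 ≤ γ) (hγ1 : γ < 1) (hP : RowStochastic P)
    {z : Fin n → ℝ} (hz : z = γ • P *ᵥ z) : z = 0 := by
  have hle : ‖z‖ ≤ γ * ‖z‖ :=
    calc ‖z‖ = γ * ‖P *ᵥ z‖ := by
          rw [← abs_of_nonneg hγ0, ← Real.norm_eq_abs, ← norm_smul, ← hz]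
      _ ≤ γ * ‖z‖ := mul_le_mul_of_nonneg_left (hP.norm_mulVec_le z) hγ0
  exact norm_le_zero_iff.1 (by nlinarith [norm_nonneg z])

/-- `valueV` uses `Matrix.inv`, a junk value unless `1 - γ • P` is invertible; it is, because
`z = γ • P *ᵥ z` forces `z = 0`. -/
lemma valueV_eq (hγ0 : 0 ≤ γ) (hγ1 : γ < 1) (hP : RowStochastic P) :
    valueV γ P r = r + γ • P *ᵥ valueV γ P r := by
  have hinj : Function.Injective ((1 - γ • P) *ᵥ ·) := fun x y hxy => by
    refine sub_eq_zero.1 (eq_zero_of_eq_smul_mulVec hγ0 hγ1 hP ?_)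
    simp only [Matrix.sub_mulVec, Matrix.one_mulVec, Matrix.smul_mulVec] at hxy
    rw [Matrix.mulVec_sub, smul_sub]
    linear_combination hxy
  have hdet := (Matrix.isUnit_iff_isUnit_det _).1 (Matrix.mulVec_injective_iff_isUnit.1 hinj)
  have hr : (1 - γ • P) *ᵥ valueV γ P r = r := by
    rw [valueV, Matrix.mulVec_mulVec, Matrix.mul_nonsing_inv _ hdet, Matrix.one_mulVec]
  rw [Matrix.sub_mulVec, Matrix.one_mulVec, Matrix.smul_mulVec] at hr
  nth_rw 2 [← hr]
  rw [sub_add_cancel]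

lemma norm_valueV_sub_tdW_le (hγ0 : 0 ≤ γ) (hγ1 : γ < 1) (hP : RowStochastic P) (l : ℕ) :
    ‖valueV γ P r - tdW γ P r l‖ ≤ γ ^ l * ‖valueV γ P r‖ := by
  induction l with
  | zero => simp [tdW]
  | succ l ih =>
    have hstep : valueV γ P r - tdW γ P r (l + 1) = γ • P *ᵥ (valueV γ P r - tdW γ P r l) := by
      conv_lhs => rw [valueV_eq hγ0 hγ1 hP]
      rw [tdW, Matrix.mulVec_sub, smul_sub, add_sub_add_left_eq_sub]
    calc ‖valueV γ P r - tdW γ P r (l + 1)‖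
        = γ * ‖P *ᵥ (valueV γ P r - tdW γ P r l)‖ := by
          rw [hstep, norm_smul_of_nonneg hγ0]
      _ ≤ γ * (γ ^ l * ‖valueV γ P r‖) :=
          mul_le_mul_of_nonneg_left ((hP.norm_mulVec_le _).trans ih) hγ0
      _ = γ ^ (l + 1) * ‖valueV γ P r‖ := by ring

lemma norm_sub_tdW_le (hγ0 : 0 ≤ γ) (hγ1 : γ < 1) (hP : RowStochastic P) (l : ℕ) :
    ‖r - tdW γ P r l‖ ≤ (1 + γ) * ‖valueV γ P r‖ := by
  have hsplit : r - tdW γ P r l = (valueV γ P r - tdW γ P r l) - γ • P *ᵥ valueV γ P r := by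
    linear_combination (norm := module) (-1 : ℝ) • valueV_eq (r := r) hγ0 hγ1 hP
  calc ‖r - tdW γ P r l‖
      ≤ ‖valueV γ P r - tdW γ P r l‖ + γ * ‖P *ᵥ valueV γ P r‖ := by
        rw [hsplit, ← norm_smul_of_nonneg hγ0]
        exact norm_sub_le _ _
    _ ≤ 1 * ‖valueV γ P r‖ + γ * ‖valueV γ P r‖ := by
        gcongr
        · exact (norm_valueV_sub_tdW_le hγ0 hγ1 hP l).trans
            (mul_le_mul_of_nonneg_right (pow_le_one₀ hγ0 hγ1.le) (norm_nonneg _))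
        · exact hP.norm_mulVec_le _
    _ = (1 + γ) * ‖valueV γ P r‖ := by ring

lemma Xmat_mulVec_inl (z : Fin n → ℝ) (k : Fin n) : (Xmat γ P *ᵥ z) (Sum.inl k) = z k := by
  simp [Xmat, Matrix.mulVec, dotProduct, ite_mul]

lemma Xmat_mulVec_inr (z : Fin n → ℝ) (k : Fin n) :
    (Xmat γ P *ᵥ z) (Sum.inr k) = γ * (z ᵥ* P) k := by
  simp only [Matrix.mulVec, Matrix.vecMul, dotProduct, Xmat, Finset.mul_sum]
  exact Finset.sum_congr rfl fun _ _ => by ring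

lemma abs_Xmat_le_one (hγ0 : 0 ≤ γ) (hγ1 : γ ≤ 1) (hP : RowStochastic P) (p : TwoN n)
    (i : Fin n) : |Xmat γ P p i| ≤ 1 := by
  rcases p with k | k
  · by_cases h : k = i <;> simp [Xmat, h]
  · rw [Xmat, abs_of_nonneg (mul_nonneg hγ0 (hP.1 i k))]
    exact mul_le_one₀ hγ1 (hP.1 i k) (hP.le_one i k)

lemma sum_abs_Xmat_mulVec_le (hγ0 : 0 ≤ γ) (hP : RowStochastic P) (z : Fin n → ℝ) :
    ∑ p, |(Xmat γ P *ᵥ z) p| ≤ (1 + γ) * ∑ k, |z k| := by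
  rw [Fintype.sum_sum_type]
  simp only [Xmat_mulVec_inl, Xmat_mulVec_inr, abs_mul, abs_of_nonneg hγ0, ← Finset.mul_sum]
  linarith [mul_le_mul_of_nonneg_left (hP.sum_abs_vecMul_le z) hγ0]

lemma sum_abs_Gseq_apply_le (hγ0 : 0 ≤ γ) (hγ1 : γ < 1) (hP : RowStochastic P) (l : ℕ)
    (i : Fin n) (c : TwoN n) :
    ∑ p, |Gseq γ P r l i p c| ≤ l * (n * (1 + γ) ^ 2 * ‖valueV γ P r‖) := by
  set β := (n : ℝ) * (1 + γ) ^ 2 * ‖valueV γ P r‖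
  induction l generalizing i c with
  | zero => simp [Gseq]
  | succ l ih =>
    have hresidual : ∑ k, |(r - tdW γ P r l) k| ≤ n * ((1 + γ) * ‖valueV γ P r‖) :=
      calc ∑ k, |(r - tdW γ P r l) k| ≤ ∑ _k : Fin n, ‖r - tdW γ P r l‖ :=
            Finset.sum_le_sum fun k _ => norm_le_pi_norm (r - tdW γ P r l) k
        _ ≤ n * ((1 + γ) * ‖valueV γ P r‖) := by
            rw [Finset.sum_const, Finset.card_univ, Fintype.card_fin, nsmul_eq_mul]
            gcongr
            exact norm_sub_tdW_le hγ0 hγ1 hP l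
    have hsource : (∑ p, |(Xmat γ P *ᵥ (r - tdW γ P r l)) p|) * |(Xmat γ P *ᵥ Pi.single i 1) c|
        ≤ β :=
      calc _ ≤ ((1 + γ) * ∑ k, |(r - tdW γ P r l) k|) * 1 := by
            rw [Matrix.mulVec_single_one, Matrix.col_apply]
            exact mul_le_mul (sum_abs_Xmat_mulVec_le hγ0 hP _)
              (abs_Xmat_le_one hγ0 hγ1.le hP c i) (abs_nonneg _) (by positivity)
        _ ≤ (1 + γ) * (n * ((1 + γ) * ‖valueV γ P r‖)) := by
            rw [mul_one]
            exact mul_le_mul_of_nonneg_left hresidual (by positivity)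
        _ = β := by ring
    have hmix : γ * ∑ j, P i j * ∑ p, |Gseq γ P r l j p c| ≤ γ * (l * β) := by
      gcongr
      calc ∑ j, P i j * ∑ p, |Gseq γ P r l j p c| ≤ ∑ j, P i j * (l * β) := by
            gcongr with j
            · exact hP.1 i j
            · exact ih j c
        _ = l * β := by rw [← Finset.sum_mul, hP.2 i, one_mul]
    calc ∑ p, |Gseq γ P r (l + 1) i p c|
        ≤ (∑ p, |(Xmat γ P *ᵥ (r - tdW γ P r l)) p|) * |(Xmat γ P *ᵥ Pi.single i 1) c|
          + γ * ∑ j, P i j * ∑ p, |Gseq γ P r l j p c| :=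
          sum_abs_vecMulVec_add_smul_sum_apply_le _ _ hγ0 (hP.1 i) _ c
      _ ≤ β + γ * (l * β) := add_le_add hsource hmix
      _ ≤ (l + 1 : ℕ) * β := by
          push_cast
          nlinarith [mul_nonneg (Nat.cast_nonneg (α := ℝ) l) (by positivity : 0 ≤ β)]

end TemporalDifference

theorem stmt10_general (n : ℕ) (γ : ℝ) (hγ0 : 0 ≤ γ) (hγ1 : γ < 1)
    (P : Matrix (Fin n) (Fin n) ℝ) (hP : RowStochastic P) (r : Fin n → ℝ)
    (l : ℕ) (i : Fin n) :
    matL1 (Gseq γ P r l i) ≤ (l : ℝ) * ((n : ℝ) * (1 + γ) ^ 2 * ‖valueV γ P r‖) :=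
  Real.iSup_le (fun c => sum_abs_Gseq_apply_le hγ0 hγ1 hP l i c) (by positivity)

/-- `‖G_l^{(i)}‖_1 ≤ l β` with `β = n (1+γ)² ‖v‖_∞`. -/
theorem stmt10 (n : ℕ) (hn : 1 ≤ n) (γ : ℝ) (hγ0 : 0 ≤ γ) (hγ1 : γ < 1)
    (P : Matrix (Fin n) (Fin n) ℝ) (hP : RowStochastic P) (r : Fin n → ℝ)
    (l : ℕ) (i : Fin n) :
    matL1 (Gseq γ P r l i) ≤ (l : ℝ) * ((n : ℝ) * (1 + γ) ^ 2 * ‖valueV γ P r‖) :=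
  stmt10_general n γ hγ0 hγ1 P hP r l i

end
end

section
/- (Lemma 3) For every L ≥ 0 and every query index ω ∈ {1,…,n}, the ℓ1 norm of the gradient of the looped L-layer Transformer output at the TD parameters satisfies ‖∇F_L^{(ω)}(A^TD, 0_{1×2n})‖_1 ≤ ((L² + L)/2) ν + L ξ, where ν = 2n(n(1+γ)²‖v‖_∞ + (1+γ)²) and ξ = 2n(1+γ) are constants independent of L. -/
open Matrix Filter Topology

noncomputable section

/-!
Every layer leaves the top `2n` rows of the embedding equal to those of the prompt, because `P̃`
has zero top rows; only the last row `z` evolves, by `z ↦ z + (u X̃ + z) M X̃ᵀ A X̃`. At the TD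
parameters this step multiplies the context part of `z` by `γP` and subtracts its `ω`-th entry
from the query entry. Differentiating along a coordinate direction of `A` (resp. `u`) gives a
recursion of the same shape, driven by a forcing term of size at most
`‖r‖ (∑ᵢ |X̃_{a i}|) |X̃_{b c}|` (resp. started at a row of `X̃`). As `γP` is nonexpansive in the
sup norm, the context part of a derivative grows at most linearly in `L` and its query entry at
most quadratically. Summing over all coordinates and using `‖r‖ ≤ (1 + γ)‖v‖`, which holds
because `r = (I - γP) v`, gives the bound.
-/

section RowStochastic

variable {n : ℕ} {γ : ℝ} {P : Matrix (Fin n) (Fin n) ℝ}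

lemma RowStochastic.le_one_s15 (hP : RowStochastic P) (i j : Fin n) : P i j ≤ 1 :=
  hP.2 i ▸ Finset.single_le_sum (fun k _ => hP.1 i k) (Finset.mem_univ j)

lemma RowStochastic.norm_mulVec_le_s15 (hP : RowStochastic P) (x : Fin n → ℝ) :
    ‖P *ᵥ x‖ ≤ ‖x‖ := by
  refine (pi_norm_le_iff_of_nonneg (norm_nonneg _)).mpr fun i => ?_
  calc ‖(P *ᵥ x) i‖ ≤ ∑ j, P i j * ‖x‖ := by
        rw [mulVec, dotProduct]
        refine (norm_sum_le _ _).trans (Finset.sum_le_sum fun j _ => ?_)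
        rw [norm_mul, Real.norm_of_nonneg (hP.1 i j)]
        exact mul_le_mul_of_nonneg_left (norm_le_pi_norm x j) (hP.1 i j)
    _ = ‖x‖ := by rw [← Finset.sum_mul, hP.2 i, one_mul]

lemma RowStochastic.norm_smul_mulVec_le (hP : RowStochastic P) (hγ0 : 0 ≤ γ)
    (x : Fin n → ℝ) : ‖(γ • P) *ᵥ x‖ ≤ γ * ‖x‖ := by
  rw [smul_mulVec, norm_smul, Real.norm_of_nonneg hγ0]
  exact mul_le_mul_of_nonneg_left (hP.norm_mulVec_le_s15 x) hγ0

lemma RowStochastic.norm_smul_mulVec_le_norm (hP : RowStochastic P) (hγ0 : 0 ≤ γ)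
    (hγ1 : γ ≤ 1) (x : Fin n → ℝ) : ‖(γ • P) *ᵥ x‖ ≤ ‖x‖ :=
  (hP.norm_smul_mulVec_le hγ0 x).trans (mul_le_of_le_one_left (norm_nonneg x) hγ1)

lemma RowStochastic.isUnit_det_one_sub_smul (hP : RowStochastic P) (hγ0 : 0 ≤ γ)
    (hγ1 : γ < 1) : IsUnit (1 - γ • P).det := by
  rw [isUnit_iff_ne_zero, Ne, ← exists_mulVec_eq_zero_iff]
  rintro ⟨x, hx0, hx⟩
  rw [sub_mulVec, one_mulVec, sub_eq_zero] at hx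
  have hle : ‖x‖ ≤ γ * ‖x‖ := by
    conv_lhs => rw [hx]
    exact hP.norm_smul_mulVec_le hγ0 x
  exact hx0 (norm_eq_zero.mp (by nlinarith [norm_nonneg x]))

lemma RowStochastic.norm_le_of_valueV (hP : RowStochastic P) (hγ0 : 0 ≤ γ) (hγ1 : γ < 1)
    (r : Fin n → ℝ) : ‖r‖ ≤ (1 + γ) * ‖valueV γ P r‖ := by
  have hv : (1 - γ • P) *ᵥ valueV γ P r = r := by
    rw [valueV, mulVec_mulVec, mul_nonsing_inv _ (hP.isUnit_det_one_sub_smul hγ0 hγ1),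
      one_mulVec]
  rw [sub_mulVec, one_mulVec] at hv
  calc ‖r‖ = ‖valueV γ P r - (γ • P) *ᵥ valueV γ P r‖ := by rw [hv]
    _ ≤ ‖valueV γ P r‖ + γ * ‖valueV γ P r‖ := by
        linarith [norm_sub_le (valueV γ P r) ((γ • P) *ᵥ valueV γ P r),
          hP.norm_smul_mulVec_le hγ0 (valueV γ P r)]
    _ = (1 + γ) * ‖valueV γ P r‖ := by ring

end RowStochastic

section NonexpansiveStep

variable {E : Type*} [SeminormedAddCommGroup E] {T : E → E} {m w : ℕ → E} {K : ℝ}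

lemma norm_le_of_nonexpansive_step (hT : ∀ x, ‖T x‖ ≤ ‖x‖)
    (hm : ∀ l, m (l + 1) = T (m l) + w l) (hw : ∀ l, ‖w l‖ ≤ K) (l : ℕ) :
    ‖m l‖ ≤ ‖m 0‖ + l * K := by
  induction l with
  | zero => simp
  | succ l ih =>
    calc ‖m (l + 1)‖ ≤ ‖T (m l)‖ + ‖w l‖ := hm l ▸ norm_add_le _ _
      _ ≤ ‖m 0‖ + (l + 1 : ℕ) * K := by push_cast; linarith [hT (m l), hw l]

lemma abs_le_of_nonexpansive_step (hT : ∀ x, ‖T x‖ ≤ ‖x‖)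
    (hm : ∀ l, m (l + 1) = T (m l) + w l) (hw : ∀ l, ‖w l‖ ≤ K)
    {φ : E → ℝ} (hφ : ∀ x, |φ x| ≤ ‖x‖) {q s : ℕ → ℝ} (hq0 : q 0 = 0)
    (hq : ∀ l, q (l + 1) = q l - φ (m l) + s l) (hs : ∀ l, |s l| ≤ K) (L : ℕ) :
    |q L| ≤ L * ‖m 0‖ + ((L ^ 2 + L) / 2 : ℝ) * K := by
  induction L with
  | zero => simp [hq0]
  | succ L ih =>
    have hmL := norm_le_of_nonexpansive_step hT hm hw L
    calc |q (L + 1)| ≤ |q L| + |φ (m L)| + |s L| := by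
          simpa [hq L, sub_eq_add_neg] using abs_add_three (q L) (-φ (m L)) (s L)
      _ ≤ _ := by push_cast; nlinarith [hφ (m L), hs L]

end NonexpansiveStep

section MatrixDeriv

variable {m k p : Type*} [Fintype k] [Fintype p] {t : ℝ}

lemma hasDerivAt_matrix_iff {f : ℝ → Matrix m p ℝ} {f' : Matrix m p ℝ} :
    HasDerivAt f f' t ↔ ∀ i j, HasDerivAt (fun s => f s i j) (f' i j) t :=
  hasDerivAt_pi.trans (forall_congr' fun _ => hasDerivAt_pi)

lemma hasDerivAt_matrix_const (C : Matrix m p ℝ) : HasDerivAt (fun _ : ℝ => C) 0 t :=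
  hasDerivAt_matrix_iff.mpr fun i j => hasDerivAt_const t (C i j)

lemma hasDerivAt_matrix_add_smul (C D : Matrix m p ℝ) :
    HasDerivAt (fun s : ℝ => C + s • D) D t :=
  hasDerivAt_matrix_iff.mpr fun i j => by
    simpa using ((hasDerivAt_id' t).mul_const (D i j)).const_add (C i j)

lemma HasDerivAt.matrix_add {f g : ℝ → Matrix m p ℝ} {f' g' : Matrix m p ℝ}
    (hf : HasDerivAt f f' t) (hg : HasDerivAt g g' t) :
    HasDerivAt (fun s => f s + g s) (f' + g') t :=
  hasDerivAt_matrix_iff.mpr fun i j =>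
    (hasDerivAt_matrix_iff.mp hf i j).add (hasDerivAt_matrix_iff.mp hg i j)

lemma HasDerivAt.matrix_mul {f : ℝ → Matrix m k ℝ} {g : ℝ → Matrix k p ℝ}
    {f' : Matrix m k ℝ} {g' : Matrix k p ℝ} (hf : HasDerivAt f f' t) (hg : HasDerivAt g g' t) :
    HasDerivAt (fun s => f s * g s) (f' * g t + f t * g') t := by
  rw [hasDerivAt_matrix_iff] at hf hg ⊢
  intro i j
  simp only [mul_apply, Matrix.add_apply, ← Finset.sum_add_distrib]
  exact HasDerivAt.fun_sum fun l _ => (hf i l).mul (hg l j)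

end MatrixDeriv

namespace LoopedTD

variable {n : ℕ}

lemma attnLayer_fromRows (A : Matrix (TwoN n) (TwoN n) ℝ) (u : Matrix Unit (TwoN n) ℝ)
    (X : Matrix (TwoN n) (CIdx n) ℝ) (R : Matrix Unit (CIdx n) ℝ) :
    attnLayer n (Pmat n u) (Qmat n A) (fromRows X R)
      = fromRows X (R + (u * X + R) * maskM n * (Xᵀ * A * X)) := by
  have hP : Pmat n u * fromRows X R = fromRows 0 (u * X + R) := by
    simp [Pmat, fromBlocks_mul_fromRows]
  have hQ : (fromRows X R)ᵀ * Qmat n A * fromRows X R = Xᵀ * A * X := by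
    simp [Qmat, transpose_fromRows, fromCols_mul_fromBlocks, fromCols_mul_fromRows]
  rw [attnLayer, hP, hQ]
  ext (_ | _) c <;> simp

def rowCtx (R : Matrix Unit (CIdx n) ℝ) : Fin n → ℝ := fun i => R () (Sum.inl i)

lemma rowCtx_zero : rowCtx (0 : Matrix Unit (CIdx n) ℝ) = 0 := rfl

lemma rowCtx_add (R S : Matrix Unit (CIdx n) ℝ) : rowCtx (R + S) = rowCtx R + rowCtx S := rfl

lemma mul_maskM_mul_apply (R : Matrix Unit (CIdx n) ℝ) (S : Matrix (CIdx n) (CIdx n) ℝ)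
    (c : CIdx n) : (R * maskM n * S) () c = ∑ i, R () (Sum.inl i) * S (Sum.inl i) c := by
  simp [mul_apply, maskM, Fintype.sum_sum_type, one_apply]

section Recursions

variable (γ : ℝ) (P : Matrix (Fin n) (Fin n) ℝ) (r : Fin n → ℝ) (ω : Fin n)

/-- The matrix `X̃` of the header: the top `2n` rows of the prompt, shared by all layers. -/
def promptTop : Matrix (TwoN n) (CIdx n) ℝ := fun p c =>
  match p, c with
  | Sum.inl k, Sum.inl i => if k = i then 1 else 0
  | Sum.inr k, Sum.inl i => γ * P i k
  | Sum.inl k, Sum.inr _ => if k = ω then 1 else 0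
  | Sum.inr _, Sum.inr _ => 0

def attnScores (A : Matrix (TwoN n) (TwoN n) ℝ) : Matrix (CIdx n) (CIdx n) ℝ :=
  (promptTop γ P ω)ᵀ * A * promptTop γ P ω

def bottomRow (A : Matrix (TwoN n) (TwoN n) ℝ) (u : Matrix Unit (TwoN n) ℝ) :
    ℕ → Matrix Unit (CIdx n) ℝ
  | 0 => fun _ => Sum.elim r 0
  | l + 1 => bottomRow A u l
      + (u * promptTop γ P ω + bottomRow A u l) * maskM n * attnScores γ P ω A

lemma embed_eq_fromRows (A : Matrix (TwoN n) (TwoN n) ℝ) (u : Matrix Unit (TwoN n) ℝ) (l : ℕ) :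
    embed γ P r ω A u l = fromRows (promptTop γ P ω) (bottomRow γ P r ω A u l) := by
  induction l with
  | zero => ext ((_ | _) | _) (_ | _) <;> rfl
  | succ l ih => rw [embed, ih, attnLayer_fromRows, bottomRow, attnScores]

lemma tfOut_eq (A : Matrix (TwoN n) (TwoN n) ℝ) (u : Matrix Unit (TwoN n) ℝ) (L : ℕ) :
    tfOut γ P r ω A u L = -bottomRow γ P r ω A u L () (Sum.inr ()) := by
  rw [tfOut, embed_eq_fromRows, fromRows_apply_inr]

lemma attnScores_add_smul (A E : Matrix (TwoN n) (TwoN n) ℝ) (t : ℝ) :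
    attnScores γ P ω (A + t • E) = attnScores γ P ω A + t • attnScores γ P ω E := by
  simp only [attnScores, Matrix.mul_add, Matrix.add_mul, Matrix.mul_smul, Matrix.smul_mul]

def tangentRow (A₀ E : Matrix (TwoN n) (TwoN n) ℝ) (u₀ e : Matrix Unit (TwoN n) ℝ) :
    ℕ → Matrix Unit (CIdx n) ℝ
  | 0 => 0
  | l + 1 => tangentRow A₀ E u₀ e l
      + (e * promptTop γ P ω + tangentRow A₀ E u₀ e l) * maskM n * attnScores γ P ω A₀
      + (u₀ * promptTop γ P ω + bottomRow γ P r ω A₀ u₀ l) * maskM n * attnScores γ P ω E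

lemma hasDerivAt_bottomRow (A₀ E : Matrix (TwoN n) (TwoN n) ℝ)
    (u₀ e : Matrix Unit (TwoN n) ℝ) (l : ℕ) :
    HasDerivAt (fun t : ℝ => bottomRow γ P r ω (A₀ + t • E) (u₀ + t • e) l)
      (tangentRow γ P r ω A₀ E u₀ e l) 0 := by
  induction l with
  | zero => exact hasDerivAt_matrix_const _
  | succ l ih =>
    have hrow := (((hasDerivAt_matrix_add_smul u₀ e).matrix_mul
      (hasDerivAt_matrix_const (promptTop γ P ω))).matrix_add ih).matrix_mul
      (hasDerivAt_matrix_const (maskM n))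
    have hscores : HasDerivAt (fun t : ℝ => attnScores γ P ω (A₀ + t • E))
        (attnScores γ P ω E) 0 := by
      simpa only [attnScores_add_smul] using
        hasDerivAt_matrix_add_smul (attnScores γ P ω A₀) (attnScores γ P ω E)
    convert ih.matrix_add (hrow.matrix_mul hscores) using 1
    · rfl
    · rw [tangentRow]
      simp only [zero_smul, add_zero, Matrix.mul_zero, add_assoc]

lemma attnScores_Atd_apply (i : Fin n) (c : CIdx n) :
    attnScores γ P ω (Atd n) (Sum.inl i) c
      = promptTop γ P ω (Sum.inr i) c - promptTop γ P ω (Sum.inl i) c := by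
  simp [attnScores, mul_apply, Atd, Fintype.sum_sum_type, promptTop, one_apply]
  ring

lemma attnScores_single_apply (a b : TwoN n) (c c' : CIdx n) :
    attnScores γ P ω (single a b 1) c c' = promptTop γ P ω a c * promptTop γ P ω b c' := by
  simp [attnScores, mul_apply, single_apply, ite_and]

lemma rowCtx_mul_maskM_mul_attnScores_Atd (R : Matrix Unit (CIdx n) ℝ) :
    rowCtx (R * maskM n * attnScores γ P ω (Atd n)) = (γ • P) *ᵥ rowCtx R - rowCtx R := by
  funext i
  simp only [rowCtx, mul_maskM_mul_apply, attnScores_Atd_apply, Pi.sub_apply, smul_mulVec,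
    Pi.smul_apply, smul_eq_mul, mulVec, dotProduct, Finset.mul_sum]
  simp only [promptTop, mul_sub, Finset.sum_sub_distrib, mul_ite, mul_one, mul_zero,
    Finset.sum_ite_eq', Finset.mem_univ, if_true]
  exact congrArg (· - _) (Finset.sum_congr rfl fun _ _ => by ring)

lemma mul_maskM_mul_attnScores_Atd_apply_inr (R : Matrix Unit (CIdx n) ℝ) :
    (R * maskM n * attnScores γ P ω (Atd n)) () (Sum.inr ()) = -R () (Sum.inl ω) := by
  simp [mul_maskM_mul_apply, attnScores_Atd_apply, promptTop]

def entryBound : TwoN n → ℝ := Sum.elim (fun _ => 1) (fun _ => γ)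

lemma sum_entryBound : ∑ p : TwoN n, entryBound γ p = n * (1 + γ) := by
  simp [entryBound, Fintype.sum_sum_type]
  ring

end Recursions

section Bounds

variable {γ : ℝ} {P : Matrix (Fin n) (Fin n) ℝ} {r : Fin n → ℝ} {ω : Fin n}

lemma abs_promptTop_le (hP : RowStochastic P) (hγ0 : 0 ≤ γ) (p : TwoN n) (c : CIdx n) :
    |promptTop γ P ω p c| ≤ entryBound γ p := by
  rcases p with k | k <;> rcases c with i | _
  · simp only [promptTop, entryBound, Sum.elim_inl]; split_ifs <;> simp
  · simp only [promptTop, entryBound, Sum.elim_inl]; split_ifs <;> simp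
  · simp only [promptTop, entryBound, Sum.elim_inr, abs_mul, abs_of_nonneg hγ0,
      abs_of_nonneg (hP.1 i k)]
    exact mul_le_of_le_one_right hγ0 (hP.le_one_s15 i k)
  · simpa [promptTop, entryBound] using hγ0

lemma sum_sum_abs_promptTop (hP : RowStochastic P) (hγ0 : 0 ≤ γ) :
    ∑ p : TwoN n, ∑ i, |promptTop γ P ω p (Sum.inl i)| = n * (1 + γ) := by
  simp only [Fintype.sum_sum_type, promptTop]
  rw [Finset.sum_comm (s := Finset.univ) (f := fun k i => |γ * P i k|)]
  simp [apply_ite, abs_mul, abs_of_nonneg hγ0, abs_of_nonneg (hP.1 _ _), ← Finset.mul_sum, hP.2]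
  ring

lemma norm_rowCtx_bottomRow_le (hP : RowStochastic P) (hγ0 : 0 ≤ γ) (hγ1 : γ ≤ 1)
    (l : ℕ) : ‖rowCtx (bottomRow γ P r ω (Atd n) 0 l)‖ ≤ ‖r‖ := by
  have hstep (l : ℕ) : rowCtx (bottomRow γ P r ω (Atd n) 0 (l + 1))
      = (γ • P) *ᵥ rowCtx (bottomRow γ P r ω (Atd n) 0 l) + 0 := by
    rw [bottomRow, Matrix.zero_mul, zero_add, rowCtx_add, rowCtx_mul_maskM_mul_attnScores_Atd]
    abel
  have h := norm_le_of_nonexpansive_step (hP.norm_smul_mulVec_le_norm hγ0 hγ1)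
    (m := fun l => rowCtx (bottomRow γ P r ω (Atd n) 0 l)) hstep (fun _ => norm_zero.le) l
  rwa [mul_zero, add_zero] at h

lemma abs_tangentRow_inr_le (hP : RowStochastic P) (hγ0 : 0 ≤ γ) (hγ1 : γ ≤ 1)
    (E : Matrix (TwoN n) (TwoN n) ℝ) (e : Matrix Unit (TwoN n) ℝ) {K : ℝ}
    (hK : ∀ l c, |(bottomRow γ P r ω (Atd n) 0 l * maskM n * attnScores γ P ω E) () c| ≤ K)
    (L : ℕ) :
    |tangentRow γ P r ω (Atd n) E 0 e L () (Sum.inr ())|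
      ≤ L * ‖rowCtx (e * promptTop γ P ω)‖ + ((L ^ 2 + L) / 2 : ℝ) * K := by
  set W := fun l => bottomRow γ P r ω (Atd n) 0 l * maskM n * attnScores γ P ω E
  set T := tangentRow γ P r ω (Atd n) E 0 e
  -- shifted by `e X̃`, the context part of the tangent evolves by `γP` plus the forcing `W`
  set m := fun l => e * promptTop γ P ω + T l
  have hstep (l : ℕ) : m (l + 1) = m l + m l * maskM n * attnScores γ P ω (Atd n) + W l := by
    simp only [m, T, W, tangentRow, Matrix.zero_mul, zero_add]
    abel
  have hK0 : 0 ≤ K := (abs_nonneg _).trans (hK 0 (Sum.inr ()))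
  have h := abs_le_of_nonexpansive_step (hP.norm_smul_mulVec_le_norm hγ0 hγ1)
    (m := fun l => rowCtx (m l)) (w := fun l => rowCtx (W l)) (φ := fun x => x ω)
    (q := fun l => T l () (Sum.inr ())) (s := fun l => W l () (Sum.inr ()))
    (fun l => by
      simp only [hstep, rowCtx_add, rowCtx_mul_maskM_mul_attnScores_Atd]
      abel)
    (fun l => (pi_norm_le_iff_of_nonneg hK0).mpr fun i => (Real.norm_eq_abs _).trans_le (hK l _))
    (fun x => (Real.norm_eq_abs (x ω)).symm.trans_le (norm_le_pi_norm x ω))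
    rfl
    (fun l => by
      have := congrFun (congrFun (hstep l) ()) (Sum.inr ())
      simp only [m, Matrix.add_apply, mul_maskM_mul_attnScores_Atd_apply_inr] at this
      simp only [rowCtx, m, Matrix.add_apply]
      linarith)
    (fun l => hK l _) L
  simpa [m, T, tangentRow] using h

lemma abs_bottomRow_mul_attnScores_single_le (hP : RowStochastic P) (hγ0 : 0 ≤ γ)
    (hγ1 : γ ≤ 1) (a b : TwoN n) (l : ℕ) (c : CIdx n) :
    |(bottomRow γ P r ω (Atd n) 0 l * maskM n * attnScores γ P ω (single a b 1)) () c|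
      ≤ ‖r‖ * (∑ i, |promptTop γ P ω a (Sum.inl i)|) * entryBound γ b := by
  set R := bottomRow γ P r ω (Atd n) 0 l
  rw [mul_maskM_mul_apply, Finset.mul_sum, Finset.sum_mul]
  refine (Finset.abs_sum_le_sum_abs _ _).trans (Finset.sum_le_sum fun i _ => ?_)
  have hR : |R () (Sum.inl i)| ≤ ‖r‖ :=
    (Real.norm_eq_abs _).symm.trans_le
      ((norm_le_pi_norm (rowCtx R) i).trans (norm_rowCtx_bottomRow_le hP hγ0 hγ1 l))
  rw [attnScores_single_apply, abs_mul, abs_mul, ← mul_assoc]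
  gcongr
  exact abs_promptTop_le hP hγ0 b c

lemma norm_rowCtx_single_mul_promptTop_le (hP : RowStochastic P) (hγ0 : 0 ≤ γ) (k : TwoN n) :
    ‖rowCtx (single () k (1 : ℝ) * promptTop γ P ω)‖ ≤ entryBound γ k := by
  refine (pi_norm_le_iff_of_nonneg ((abs_nonneg _).trans
    (abs_promptTop_le (ω := ω) hP hγ0 k (Sum.inr ())))).mpr fun i => ?_
  simpa [rowCtx, single_mul_apply_same] using abs_promptTop_le (ω := ω) hP hγ0 k (Sum.inl i)

lemma gvec_inl (L : ℕ) (a b : TwoN n) :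
    gvec γ P r L ω (Sum.inl (a, b))
      = -tangentRow γ P r ω (Atd n) (single a b 1) 0 0 L () (Sum.inr ()) := by
  have h := (hasDerivAt_matrix_iff.mp
    (hasDerivAt_bottomRow γ P r ω (Atd n) (single a b 1) 0 0 L) () (Sum.inr ())).fun_neg
  simp only [smul_zero, add_zero] at h
  simpa only [gvec, tfOut_eq] using h.deriv

lemma gvec_inr (L : ℕ) (k : TwoN n) :
    gvec γ P r L ω (Sum.inr k)
      = -tangentRow γ P r ω (Atd n) 0 0 (single () k (1 : ℝ)) L () (Sum.inr ()) := by
  have h := (hasDerivAt_matrix_iff.mp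
    (hasDerivAt_bottomRow γ P r ω (Atd n) 0 0 (single () k (1 : ℝ)) L) () (Sum.inr ())).fun_neg
  simp only [smul_zero, add_zero, zero_add] at h
  simpa only [gvec, tfOut_eq] using h.deriv

lemma abs_gvec_inl_le (hP : RowStochastic P) (hγ0 : 0 ≤ γ) (hγ1 : γ ≤ 1) (L : ℕ)
    (a b : TwoN n) :
    |gvec γ P r L ω (Sum.inl (a, b))| ≤ ((L ^ 2 + L) / 2 : ℝ) *
      (‖r‖ * (∑ i, |promptTop γ P ω a (Sum.inl i)|) * entryBound γ b) := by
  simpa [gvec_inl, rowCtx_zero] using abs_tangentRow_inr_le hP hγ0 hγ1 _ 0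
    (abs_bottomRow_mul_attnScores_single_le hP hγ0 hγ1 a b) L

lemma abs_gvec_inr_le (hP : RowStochastic P) (hγ0 : 0 ≤ γ) (hγ1 : γ ≤ 1) (L : ℕ)
    (k : TwoN n) : |gvec γ P r L ω (Sum.inr k)| ≤ L * entryBound γ k := by
  have h := abs_tangentRow_inr_le (r := r) (ω := ω) hP hγ0 hγ1 0 (single () k (1 : ℝ))
    (K := 0) (fun l c => by simp [attnScores]) L
  rw [mul_zero, add_zero] at h
  rw [gvec_inr, abs_neg]
  exact h.trans (by gcongr; exact norm_rowCtx_single_mul_promptTop_le hP hγ0 k)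

lemma sum_abs_gvec_inl_le (hP : RowStochastic P) (hγ0 : 0 ≤ γ) (hγ1 : γ ≤ 1) (L : ℕ) :
    ∑ ab : TwoN n × TwoN n, |gvec γ P r L ω (Sum.inl ab)|
      ≤ ((L ^ 2 + L) / 2 : ℝ) * ‖r‖ * (n * (1 + γ)) ^ 2 := by
  calc _ ≤ ∑ ab : TwoN n × TwoN n, ((L ^ 2 + L) / 2 : ℝ) *
        (‖r‖ * (∑ i, |promptTop γ P ω ab.1 (Sum.inl i)|) * entryBound γ ab.2) :=
        Finset.sum_le_sum fun ab _ => abs_gvec_inl_le hP hγ0 hγ1 L ab.1 ab.2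
    _ = ((L ^ 2 + L) / 2 : ℝ) * ‖r‖ *
        ((∑ a, ∑ i, |promptTop γ P ω a (Sum.inl i)|) * ∑ b, entryBound γ b) := by
        rw [Fintype.sum_prod_type, Finset.sum_mul_sum, Finset.mul_sum]
        refine Finset.sum_congr rfl fun a _ => ?_
        rw [Finset.mul_sum]
        exact Finset.sum_congr rfl fun b _ => by ring
    _ = ((L ^ 2 + L) / 2 : ℝ) * ‖r‖ * (n * (1 + γ)) ^ 2 := by
        rw [sum_sum_abs_promptTop hP hγ0, sum_entryBound]; ring

lemma sum_abs_gvec_inr_le (hP : RowStochastic P) (hγ0 : 0 ≤ γ) (hγ1 : γ ≤ 1) (L : ℕ) :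
    ∑ k : TwoN n, |gvec γ P r L ω (Sum.inr k)| ≤ L * (n * (1 + γ)) :=
  calc _ ≤ ∑ k : TwoN n, L * entryBound γ k :=
        Finset.sum_le_sum fun k _ => abs_gvec_inr_le hP hγ0 hγ1 L k
    _ = L * (n * (1 + γ)) := by rw [← Finset.mul_sum, sum_entryBound]

end Bounds

end LoopedTD

open LoopedTD

theorem stmt15_general (n : ℕ) (γ : ℝ) (hγ0 : 0 ≤ γ) (hγ1 : γ < 1)
    (P : Matrix (Fin n) (Fin n) ℝ) (hP : RowStochastic P) (r : Fin n → ℝ)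
    (L : ℕ) (ω : Fin n) :
    ∑ idx : (TwoN n × TwoN n) ⊕ TwoN n, |gvec γ P r L ω idx|
      ≤ (((L : ℝ) ^ 2 + L) / 2) *
          (2 * (n : ℝ) * ((n : ℝ) * (1 + γ) ^ 2 * ‖valueV γ P r‖ + (1 + γ) ^ 2))
        + (L : ℝ) * (2 * (n : ℝ) * (1 + γ)) := by
  have hAsum := sum_abs_gvec_inl_le (r := r) (ω := ω) hP hγ0 hγ1.le L
  have husum := sum_abs_gvec_inr_le (r := r) (ω := ω) hP hγ0 hγ1.le L
  have hr := hP.norm_le_of_valueV hγ0 hγ1 r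
  set C : ℝ := ((L : ℝ) ^ 2 + L) / 2
  set v := valueV γ P r
  have hA : C * ‖r‖ * (n * (1 + γ)) ^ 2
      ≤ C * (2 * n * (n * (1 + γ) ^ 2 * ‖v‖ + (1 + γ) ^ 2)) :=
    calc C * ‖r‖ * (n * (1 + γ)) ^ 2 ≤ C * (2 * ‖v‖) * (n * (1 + γ)) ^ 2 := by
          gcongr; nlinarith [norm_nonneg v]
      _ = C * (2 * n * (n * (1 + γ) ^ 2 * ‖v‖ + 0)) := by ring
      _ ≤ _ := by gcongr; positivity
  have hu : (L : ℝ) * (n * (1 + γ)) ≤ L * (2 * n * (1 + γ)) := by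
    gcongr; nlinarith [show (0 : ℝ) ≤ n * (1 + γ) by positivity]
  rw [Fintype.sum_sum_type]
  linarith

/-- Lemma 3: `‖∇F_L^{(ω)}(A^TD, 0)‖_1 ≤ ((L² + L)/2) ν + L ξ` with
`ν = 2n (n(1+γ)²‖v‖_∞ + (1+γ)²)` and `ξ = 2n(1+γ)`. -/
theorem stmt15 (n : ℕ) (hn : 1 ≤ n) (γ : ℝ) (hγ0 : 0 ≤ γ) (hγ1 : γ < 1)
    (P : Matrix (Fin n) (Fin n) ℝ) (hP : RowStochastic P) (r : Fin n → ℝ)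
    (L : ℕ) (ω : Fin n) :
    ∑ idx : (TwoN n × TwoN n) ⊕ TwoN n, |gvec γ P r L ω idx|
      ≤ (((L : ℝ) ^ 2 + L) / 2) *
          (2 * (n : ℝ) * ((n : ℝ) * (1 + γ) ^ 2 * ‖valueV γ P r‖ + (1 + γ) ^ 2))
        + (L : ℝ) * (2 * (n : ℝ) * (1 + γ)) :=
  stmt15_general n γ hγ0 hγ1 P hP r L ω

end
end
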